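/- Let (b_n), (b̃_n), (b_n^δ) be sequences of positive reals satisfying: (i) b̃_n ≤ b_n ≤ 2·b̃_n for all n; (ii) there is c > 0 with b_{m+n+1} ≤ c·b_m·b_n for all m, n ≥ 1; (iii) b_n^δ ≤ b̃_n for all n; (iv) there is c₁ > 0 with b^δ_{n+m+2} ≥ c₁·b_n^δ·b_m^δ for all n, m ≥ 1; (v) #{j ∈ {1, …, n} : b_j^δ ≥ b̃_j/2} ≥ 3n/4 for all n ≥ 1. Then the limit e^{−ξ} := lim_{n→∞} b_n^{1/n} exists, equals lim_{n→∞} (b_n^δ)^{1/n}, and there exist constants 0 < C₁ ≤ C₂ < ∞ such that C₁·e^{−nξ} ≤ b_n ≤ C₂·e^{−nξ} and b_n^δ ≤ C₂·e^{−nξ} for all n ≥ 1. -/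

import Mathlib

open Filter Topology

lemma subadd_linear_upper (N : ℕ) (hN : 1 ≤ N) (a : ℕ → ℝ)
    (hsub : ∀ p q, N ≤ p → N ≤ q → a (p + q) ≤ a p + a q) :
    ∃ K : ℝ, 0 ≤ K ∧ ∀ n, N ≤ n → a n ≤ K * n := by
  set K : ℝ := max 0 (∑ r ∈ Finset.Icc N (2 * N), |a r / r|) with hK
  have hK0 : 0 ≤ K := le_max_left _ _
  refine ⟨K, hK0, ?_⟩
  have hbase : ∀ r, N ≤ r → r ≤ 2 * N → a r ≤ K * r := by
    intro r h1 h2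
    have hr0 : (0:ℝ) < r := by
      have : 1 ≤ r := le_trans hN h1
      exact_mod_cast Nat.pos_of_ne_zero (by omega)
    have hmem : r ∈ Finset.Icc N (2 * N) := Finset.mem_Icc.2 ⟨h1, h2⟩
    have h3 : a r / r ≤ ∑ s ∈ Finset.Icc N (2 * N), |a s / s| := by
      calc a r / r ≤ |a r / r| := le_abs_self _
        _ ≤ _ := Finset.single_le_sum (f := fun s => |a s / s|) (fun s _ => abs_nonneg _) hmem
    have h4 : a r / r ≤ K := le_trans h3 (le_max_right _ _)
    calc a r = (a r / r) * r := by field_simp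
      _ ≤ K * r := by apply mul_le_mul_of_nonneg_right h4 (le_of_lt hr0)
  intro n
  induction n using Nat.strong_induction_on with
  | _ n ih =>
    intro hn
    by_cases hcase : n ≤ 2 * N
    · exact hbase n hn hcase
    · push_neg at hcase
      have h1 : N ≤ n - N := by omega
      have h2 : n - N < n := by omega
      have h3 : N + (n - N) = n := by omega
      have h4 : a n ≤ a N + a (n - N) := by
        have := hsub N (n - N) le_rfl h1; rwa [h3] at this
      have h5 : a (n - N) ≤ K * (n - N : ℕ) := ih _ h2 h1
      have h6 : a N ≤ K * N := hbase N le_rfl (by omega)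
      have h7 : ((n - N : ℕ) : ℝ) = (n : ℝ) - N := by
        push_cast [Nat.cast_sub (by omega : N ≤ n)]; ring
      rw [h7] at h5
      linarith

lemma fekete_aux (N : ℕ) (hN : 1 ≤ N) (a : ℕ → ℝ)
    (hsub : ∀ p q, N ≤ p → N ≤ q → a (p + q) ≤ a p + a q)
    (C : ℝ) (hC : ∀ n, N ≤ n → C * n ≤ a n) :
    ∃ L : ℝ, (∀ n, N ≤ n → L * n ≤ a n) ∧
      Tendsto (fun n : ℕ => a n / n) atTop (𝓝 L) := by
  set S : Set ℝ := {x | ∃ n : ℕ, N ≤ n ∧ a n / n = x} with hS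
  have hSne : S.Nonempty := ⟨a N / N, N, le_rfl, rfl⟩
  have hSbdd : BddBelow S := by
    refine ⟨C, ?_⟩
    rintro x ⟨n, hn, rfl⟩
    have hn0 : (0:ℝ) < n := by exact_mod_cast Nat.pos_of_ne_zero (by omega)
    rw [le_div_iff₀ hn0]
    exact hC n hn
  set L := sInf S with hL
  have hL_le : ∀ n, N ≤ n → L ≤ a n / n := fun n hn => csInf_le hSbdd ⟨n, hn, rfl⟩
  have hLn : ∀ n, N ≤ n → L * n ≤ a n := by
    intro n hn
    have hn0 : (0:ℝ) < n := by exact_mod_cast Nat.pos_of_ne_zero (by omega)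
    have := hL_le n hn
    rw [le_div_iff₀ hn0] at this
    exact this
  refine ⟨L, hLn, ?_⟩
  rw [tendsto_order]
  constructor
  · intro x hx
    filter_upwards [eventually_ge_atTop N] with n hn
    have hn0 : (0:ℝ) < n := by exact_mod_cast Nat.pos_of_ne_zero (by omega)
    exact hx.trans_le (hL_le n hn)
  · intro x hx
    set ε := x - L with hε
    have hε0 : 0 < ε := by simp [hε]; linarith
    obtain ⟨y, ⟨k, hk, rfl⟩, hy⟩ := exists_lt_of_csInf_lt hSne
      (show L < L + ε / 2 by linarith)
    have hk1 : 1 ≤ k := le_trans hN hk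
    have hk0 : (0:ℝ) < k := by exact_mod_cast hk1
    set t := L + ε / 2 with ht
    have hak : a k < t * k := by
      rw [div_lt_iff₀ hk0] at hy; linarith
    have key : ∀ q r, N ≤ r → a (q * k + r) ≤ q * a k + a r := by
      intro q
      induction q with
      | zero => intro r hr; simp
      | succ q ih =>
        intro r hr
        have hidx : (q + 1) * k + r = k + (q * k + r) := by ring
        have h1 : a ((q+1) * k + r) ≤ a k + a (q * k + r) := by
          rw [hidx]
          exact hsub k (q * k + r) hk (le_trans hr (Nat.le_add_left r (q * k)))
        have h2 := ih r hr
        push_cast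
        push_cast at h2
        linarith
    set R : ℝ := ∑ r ∈ Finset.Icc N (N + k), |a r| with hR
    have hR0 : 0 ≤ R := Finset.sum_nonneg (fun _ _ => abs_nonneg _)
    have hRb : ∀ r, r ∈ Finset.Icc N (N + k) → a r ≤ R := by
      intro r hr
      calc a r ≤ |a r| := le_abs_self _
        _ ≤ R := Finset.single_le_sum (f := fun s => |a s|) (fun s _ => abs_nonneg _) hr
    set D : ℝ := (N + k) * |t| + R with hD
    have hD0 : 0 ≤ D := by positivity
    obtain ⟨n₀, hn₀⟩ := exists_nat_gt (2 * D / ε)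
    filter_upwards [eventually_ge_atTop N, eventually_ge_atTop (n₀ + 1)] with n hnN hnn0
    have hn0 : (0:ℝ) < n := by exact_mod_cast Nat.pos_of_ne_zero (by omega)
    set r := N + (n - N) % k with hr
    set q := (n - N) / k with hq
    have hmod := Nat.div_add_mod (n - N) k
    have hqr : q * k + r = n := by
      have h2 : q * k = k * ((n - N) / k) := by rw [hq, Nat.mul_comm]
      rw [h2, hr]; omega
    have hrle : r ≤ N + k := by
      have := Nat.mod_lt (n - N) (by omega : 0 < k)
      omega
    have hrN : N ≤ r := Nat.le_add_right _ _
    have hkey : a n ≤ q * a k + a r := by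
      have := key q r hrN
      rwa [hqr] at this
    have haR : a r ≤ R := hRb r (Finset.mem_Icc.2 ⟨hrN, hrle⟩)
    -- cast relation: (q:ℝ) * k = n - r
    have hcast : (q : ℝ) * k = (n : ℝ) - r := by
      have : (q * k + r : ℕ) = n := hqr
      have := congrArg (fun m : ℕ => (m : ℝ)) this
      push_cast at this
      linarith
    have hq0 : (0:ℝ) ≤ q := Nat.cast_nonneg _
    have h1 : (q:ℝ) * a k ≤ (q:ℝ) * (t * k) := mul_le_mul_of_nonneg_left (le_of_lt hak) hq0
    have h2 : (q:ℝ) * (t * k) = ((n:ℝ) - r) * t := by rw [← mul_assoc, mul_comm (q:ℝ) t, mul_assoc, mul_comm (t) ((q:ℝ)*k)]; rw [hcast]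
    have hr0 : (0:ℝ) ≤ r := Nat.cast_nonneg _
    have hrleR : (r:ℝ) ≤ N + k := by exact_mod_cast hrle
    have h3 : -((r:ℝ) * t) ≤ ((N:ℝ) + k) * |t| := by
      calc -((r:ℝ) * t) ≤ |(r:ℝ) * t| := neg_le_abs _
        _ = (r:ℝ) * |t| := by rw [abs_mul, abs_of_nonneg hr0]
        _ ≤ ((N:ℝ) + k) * |t| := mul_le_mul_of_nonneg_right hrleR (abs_nonneg _)
    have h4 : a n ≤ (n:ℝ) * t + D := by
      have : a n ≤ ((n:ℝ) - r) * t + R := by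
        calc a n ≤ (q:ℝ) * a k + a r := hkey
          _ ≤ ((n:ℝ) - r) * t + R := by rw [← h2] at *; linarith
      have hexp : ((n:ℝ) - r) * t = (n:ℝ) * t + (-((r:ℝ)*t)) := by ring
      rw [hexp] at this
      push_cast at this ⊢
      linarith
    have hDn : D < (n:ℝ) * ε / 2 := by
      have hnn : (n₀ : ℝ) < n := by exact_mod_cast Nat.lt_of_lt_of_le (Nat.lt_succ_self n₀) hnn0
      have : 2 * D / ε < (n:ℝ) := lt_trans hn₀ hnn
      rw [div_lt_iff₀ hε0] at this
      nlinarith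
    have : a n < (n:ℝ) * x := by
      have hx' : x = t + ε / 2 := by rw [ht, hε]; ring
      calc a n ≤ (n:ℝ) * t + D := h4
        _ < (n:ℝ) * t + (n:ℝ) * ε / 2 := by linarith
        _ = (n:ℝ) * x := by rw [hx']; ring
    rw [div_lt_iff₀ hn0, mul_comm]
    linarith

lemma good_pair (n : ℕ) (hn : 4 ≤ n) (P : ℕ → Prop) [DecidablePred P]
    (h : (3 * ((n - 1 : ℕ) : ℝ)) / 4 ≤ ((Finset.Icc 1 (n - 1)).filter P).card) :
    ∃ j k : ℕ, 1 ≤ j ∧ 1 ≤ k ∧ j + k + 1 = n ∧ P j ∧ P k := by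
  set m := n - 1 with hm
  have hm3 : 3 ≤ m := by omega
  set G := (Finset.Icc 1 m).filter P with hG
  set A := (Finset.Icc 1 (m - 1)).filter P with hA
  set B := A.image (fun j => m - j) with hB
  have hGA : G.card ≤ A.card + 1 := by
    have hsub : G ⊆ insert m A := by
      intro x hx
      rw [hG, Finset.mem_filter, Finset.mem_Icc] at hx
      rcases eq_or_ne x m with hxm | hxm
      · rw [hxm]; exact Finset.mem_insert_self m A
      · apply Finset.mem_insert_of_mem
        rw [hA, Finset.mem_filter, Finset.mem_Icc]
        exact ⟨⟨hx.1.1, by omega⟩, hx.2⟩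
    calc G.card ≤ (insert m A).card := Finset.card_le_card hsub
      _ ≤ A.card + 1 := Finset.card_insert_le _ _
  have hAmem : ∀ x ∈ A, 1 ≤ x ∧ x ≤ m - 1 ∧ P x := by
    intro x hx
    rw [hA, Finset.mem_filter, Finset.mem_Icc] at hx
    exact ⟨hx.1.1, hx.1.2, hx.2⟩
  have hBA : B.card = A.card := by
    rw [hB]
    apply Finset.card_image_of_injOn
    intro x hx y hy hxy
    have hx' := hAmem x hx
    have hy' := hAmem y hy
    simp only at hxy
    omega
  by_cases hAB : (A ∩ B).Nonempty
  · obtain ⟨x, hx⟩ := hAB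
    rw [Finset.mem_inter] at hx
    obtain ⟨hxA, hxB⟩ := hx
    rw [hB, Finset.mem_image] at hxB
    obtain ⟨j, hjA, hjx⟩ := hxB
    have hx' := hAmem x hxA
    have hj' := hAmem j hjA
    exact ⟨x, j, hx'.1, hj'.1, by omega, hx'.2.2, hj'.2.2⟩
  · exfalso
    rw [Finset.not_nonempty_iff_eq_empty] at hAB
    have hdisj : Disjoint A B := Finset.disjoint_iff_inter_eq_empty.2 hAB
    have hsubU : A ∪ B ⊆ Finset.Icc 1 (m - 1) := by
      apply Finset.union_subset
      · intro x hx; rw [Finset.mem_Icc]; have := hAmem x hx; exact ⟨this.1, this.2.1⟩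
      · intro x hx
        rw [hB, Finset.mem_image] at hx
        obtain ⟨j, hjA, hjx⟩ := hx
        have := hAmem j hjA
        rw [Finset.mem_Icc]
        omega
    have hcardU : A.card + B.card ≤ m - 1 := by
      calc A.card + B.card = (A ∪ B).card := (Finset.card_union_of_disjoint hdisj).symm
        _ ≤ (Finset.Icc 1 (m - 1)).card := Finset.card_le_card hsubU
        _ = m - 1 := by rw [Nat.card_Icc]; omega
    have h2A : 2 * A.card ≤ m - 1 := by omega
    -- real arithmetic contradiction
    have hmR : (3:ℝ) ≤ (m:ℝ) := by exact_mod_cast hm3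
    have hGR : (3 * (m:ℝ)) / 4 ≤ G.card := h
    have hGAR : (G.card : ℝ) ≤ (A.card : ℝ) + 1 := by exact_mod_cast hGA
    have h2AR : 2 * (A.card : ℝ) ≤ (m:ℝ) - 1 := by
      have : ((m - 1 : ℕ) : ℝ) = (m:ℝ) - 1 := by
        rw [Nat.cast_sub (by omega : 1 ≤ m)]; norm_num
      calc 2 * (A.card : ℝ) = ((2 * A.card : ℕ) : ℝ) := by push_cast; ring
        _ ≤ ((m - 1 : ℕ) : ℝ) := by exact_mod_cast h2A
        _ = (m:ℝ) - 1 := this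
    linarith

lemma shift_div_tendsto (a : ℕ → ℝ) (L : ℝ)
    (h : Tendsto (fun n : ℕ => a n / n) atTop (𝓝 L)) (k : ℕ) :
    Tendsto (fun n : ℕ => a (n + k) / n) atTop (𝓝 L) := by
  have h1 : Tendsto (fun n : ℕ => a (n + k) / ((n : ℝ) + k)) atTop (𝓝 L) := by
    have := (tendsto_add_atTop_iff_nat k).2 h
    refine this.congr (fun n => ?_)
    push_cast
    ring_nf
  have h2 : Tendsto (fun n : ℕ => ((n : ℝ) + k) / n) atTop (𝓝 1) := by
    have hk0 : Tendsto (fun n : ℕ => (k : ℝ) * (1 / n)) atTop (𝓝 0) := by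
      simpa using tendsto_one_div_atTop_nhds_zero_nat.const_mul (k : ℝ)
    have : Tendsto (fun n : ℕ => 1 + (k : ℝ) * (1 / n)) atTop (𝓝 (1 + 0)) :=
      tendsto_const_nhds.add hk0
    rw [add_zero] at this
    refine this.congr' ?_
    filter_upwards [eventually_ge_atTop 1] with n hn
    have hn0 : (n : ℝ) ≠ 0 := by
      have : (0:ℝ) < n := by exact_mod_cast hn
      linarith
    field_simp
  have := h1.mul h2
  rw [mul_one] at this
  refine this.congr' ?_
  filter_upwards [eventually_ge_atTop 1] with n hn
  have hn0 : (n : ℝ) ≠ 0 := by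
    have : (0:ℝ) < n := by exact_mod_cast hn
    linarith
  have hnk0 : (n : ℝ) + k ≠ 0 := by positivity
  field_simp

lemma tendsto_affine_shift (a : ℕ → ℝ) (L E : ℝ) (j k : ℕ)
    (h : Tendsto (fun n : ℕ => a n / n) atTop (𝓝 L)) :
    Tendsto (fun n : ℕ => (E + a (n + j)) / ((n : ℝ) + k)) atTop (𝓝 L) := by
  have hE : Tendsto (fun n : ℕ => E / ((n : ℝ) + k)) atTop (𝓝 0) := by
    apply Tendsto.div_atTop (tendsto_const_nhds)
    exact tendsto_atTop_add_const_right _ _ tendsto_natCast_atTop_atTop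
  have hsh := shift_div_tendsto a L h j
  have hk2 : Tendsto (fun n : ℕ => (k : ℝ) / ((n : ℝ) + k)) atTop (𝓝 0) := by
    apply Tendsto.div_atTop (tendsto_const_nhds)
    exact tendsto_atTop_add_const_right _ _ tendsto_natCast_atTop_atTop
  have hfrac : Tendsto (fun n : ℕ => (n : ℝ) / ((n : ℝ) + k)) atTop (𝓝 1) := by
    have : Tendsto (fun n : ℕ => 1 - (k : ℝ) / ((n : ℝ) + k)) atTop (𝓝 (1 - 0)) :=
      tendsto_const_nhds.sub hk2
    rw [sub_zero] at this
    refine this.congr' ?_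
    filter_upwards [eventually_ge_atTop 1] with n hn
    have hnk0 : (n : ℝ) + k ≠ 0 := by positivity
    field_simp
    ring
  have hmain : Tendsto (fun n : ℕ => E / ((n : ℝ) + k) + (a (n + j) / n) * ((n : ℝ) / ((n : ℝ) + k)))
      atTop (𝓝 (0 + L * 1)) := hE.add (hsh.mul hfrac)
  rw [zero_add, mul_one] at hmain
  refine hmain.congr' ?_
  filter_upwards [eventually_ge_atTop 1] with n hn
  have hn0 : (n : ℝ) ≠ 0 := by
    have : (0:ℝ) < n := by exact_mod_cast hn
    linarith
  have hnk0 : (n : ℝ) + k ≠ 0 := by positivity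
  field_simp

/-- abstract up-to-constants lemma for sequences of positive reals. -/
theorem abstract_up_to_constants
    (b btil bd : ℕ → ℝ)
    (hbpos : ∀ n, 0 < b n) (hbtilpos : ∀ n, 0 < btil n) (hbdpos : ∀ n, 0 < bd n)
    (h1 : ∀ n, btil n ≤ b n ∧ b n ≤ 2 * btil n)
    (h2 : ∃ c : ℝ, 0 < c ∧ ∀ m n : ℕ, 1 ≤ m → 1 ≤ n → b (m + n + 1) ≤ c * b m * b n)
    (h3 : ∀ n, bd n ≤ btil n)
    (h4 : ∃ c₁ : ℝ, 0 < c₁ ∧ ∀ n m : ℕ, 1 ≤ n → 1 ≤ m →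
      c₁ * bd n * bd m ≤ bd (n + m + 2))
    (h5 : ∀ n : ℕ, 1 ≤ n →
      (3 * (n : ℝ)) / 4 ≤
        ((Finset.Icc 1 n).filter (fun j => btil j / 2 ≤ bd j)).card) :
    ∃ ξ : ℝ,
      Tendsto (fun n : ℕ => b n ^ (1 / (n : ℝ))) atTop (𝓝 (Real.exp (-ξ))) ∧
      Tendsto (fun n : ℕ => bd n ^ (1 / (n : ℝ))) atTop (𝓝 (Real.exp (-ξ))) ∧
      ∃ C₁ C₂ : ℝ, 0 < C₁ ∧ C₁ ≤ C₂ ∧ ∀ n : ℕ, 1 ≤ n →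
        C₁ * Real.exp (-(n * ξ)) ≤ b n ∧
        b n ≤ C₂ * Real.exp (-(n * ξ)) ∧
        bd n ≤ C₂ * Real.exp (-(n * ξ)) := by
  obtain ⟨c, hc, h2⟩ := h2
  obtain ⟨c₁, hc₁, h4⟩ := h4
  have hbd_le_b : ∀ n, bd n ≤ b n := fun n => le_trans (h3 n) (h1 n).1
  set a : ℕ → ℝ := fun k => Real.log c + Real.log (b (k - 1)) with ha
  set mm : ℕ → ℝ := fun k => Real.log c₁ + Real.log (bd (k - 2)) with hmm
  -- subadditivity of a
  have hsub_a : ∀ p q, 2 ≤ p → 2 ≤ q → a (p + q) ≤ a p + a q := by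
    intro p q hp hq
    have hidx : p + q - 1 = (p - 1) + (q - 1) + 1 := by omega
    have hb2 := h2 (p - 1) (q - 1) (by omega) (by omega)
    rw [← hidx] at hb2
    have hlog : Real.log (b (p + q - 1)) ≤ Real.log (c * b (p - 1) * b (q - 1)) :=
      Real.log_le_log (hbpos _) hb2
    rw [Real.log_mul (mul_ne_zero (ne_of_gt hc) (ne_of_gt (hbpos _))) (ne_of_gt (hbpos _)),
        Real.log_mul (ne_of_gt hc) (ne_of_gt (hbpos _))] at hlog
    simp only [ha]
    linarith
  -- superadditivity of mm (as subadditivity of -mm)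
  have hsub_m : ∀ p q, 3 ≤ p → 3 ≤ q → (fun k => -mm k) (p + q) ≤ (fun k => -mm k) p + (fun k => -mm k) q := by
    intro p q hp hq
    have hidx : (p - 2) + (q - 2) + 2 = p + q - 2 := by omega
    have hb4 := h4 (p - 2) (q - 2) (by omega) (by omega)
    rw [hidx] at hb4
    have hlog : Real.log (c₁ * bd (p - 2) * bd (q - 2)) ≤ Real.log (bd (p + q - 2)) :=
      Real.log_le_log (by have := hbdpos (p-2); have := hbdpos (q-2); positivity) hb4
    rw [Real.log_mul (mul_ne_zero (ne_of_gt hc₁) (ne_of_gt (hbdpos _))) (ne_of_gt (hbdpos _)),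
        Real.log_mul (ne_of_gt hc₁) (ne_of_gt (hbdpos _))] at hlog
    simp only [hmm]
    linarith
  -- linear upper bound for a
  obtain ⟨Ka, hKa0, hKa⟩ := subadd_linear_upper 2 (by norm_num) a hsub_a
  -- linear upper bound for -mm
  obtain ⟨Km, hKm0, hKm⟩ := subadd_linear_upper 3 (by norm_num) (fun k => -mm k) hsub_m
  -- relation mm k ≤ E + a (k-1) for k ≥ 3, where E = log c₁ - log c
  set E : ℝ := Real.log c₁ - Real.log c with hE
  have hma : ∀ k, 3 ≤ k → mm k ≤ E + a (k - 1) := by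
    intro k hk
    have hidx : k - 1 - 1 = k - 2 := by omega
    have hlog : Real.log (bd (k - 2)) ≤ Real.log (b (k - 2)) :=
      Real.log_le_log (hbdpos _) (hbd_le_b _)
    simp only [hmm, ha, hidx]
    linarith
  -- lower bound for a
  have hCa : ∀ n, 2 ≤ n → (-( |Real.log c - Real.log c₁| + 2 * Km)) * n ≤ a n := by
    intro n hn
    have h1n : (1:ℝ) ≤ n := by exact_mod_cast le_trans (by norm_num) hn
    have hmlow : -mm (n + 1) ≤ Km * ((n:ℕ) + 1 : ℕ) := hKm (n + 1) (by omega)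
    have hcast : (((n:ℕ) + 1 : ℕ) : ℝ) = (n : ℝ) + 1 := by push_cast; ring
    rw [hcast] at hmlow
    have hidx : n + 1 - 2 = n - 1 := by omega
    have hlog : Real.log (bd (n - 1)) ≤ Real.log (b (n - 1)) :=
      Real.log_le_log (hbdpos _) (hbd_le_b _)
    have hval : Real.log c - Real.log c₁ + mm (n + 1) ≤ a n := by
      simp only [hmm, ha, hidx]
      linarith
    have habs : -|Real.log c - Real.log c₁| ≤ Real.log c - Real.log c₁ := neg_abs_le _
    nlinarith [abs_nonneg (Real.log c - Real.log c₁)]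
  -- lower bound for -mm
  have hCm : ∀ n, 3 ≤ n → (-( |E| + Ka)) * n ≤ (fun k => -mm k) n := by
    intro n hn
    have h1n : (1:ℝ) ≤ n := by exact_mod_cast le_trans (by norm_num) hn
    have hup : a (n - 1) ≤ Ka * ((n - 1 : ℕ) : ℝ) := hKa (n - 1) (by omega)
    have hcast : ((n - 1 : ℕ) : ℝ) = (n : ℝ) - 1 := by
      rw [Nat.cast_sub (by omega : 1 ≤ n)]; norm_num
    rw [hcast] at hup
    have h0 := hma n hn
    have h6 : |E| * 1 ≤ |E| * n := mul_le_mul_of_nonneg_left h1n (abs_nonneg E)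
    have h7 : E ≤ |E| := le_abs_self E
    simp only
    nlinarith
  -- Fekete for a and -mm
  obtain ⟨L, hLlow, hLtend⟩ := fekete_aux 2 (by norm_num) a hsub_a _ hCa
  obtain ⟨L₂, hL₂low, hL₂tend⟩ := fekete_aux 3 (by norm_num) (fun k => -mm k) hsub_m _ hCm
  set M : ℝ := -L₂ with hM
  have hMup : ∀ k, 3 ≤ k → mm k ≤ M * k := by
    intro k hk
    have h' : L₂ * k ≤ -mm k := hL₂low k hk
    have h'' : M * k = -(L₂ * k) := by rw [hM]; ring
    linarith
  have hMtend : Tendsto (fun n : ℕ => mm n / n) atTop (𝓝 M) := by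
    have := hL₂tend.neg
    rw [hM]
    refine this.congr (fun n => ?_)
    simp [neg_div]
  -- M ≤ L
  have hML : M ≤ L := by
    have hf : Tendsto (fun n : ℕ => mm (n + 3) / ((n : ℝ) + 3)) atTop (𝓝 M) := by
      have := (tendsto_add_atTop_iff_nat 3).2 hMtend
      refine this.congr (fun n => ?_)
      push_cast
      ring_nf
    have hg : Tendsto (fun n : ℕ => (E + a (n + 2)) / ((n : ℝ) + 3)) atTop (𝓝 L) :=
      tendsto_affine_shift a L E 2 3 hLtend
    refine le_of_tendsto_of_tendsto' hf hg (fun n => ?_)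
    have hden : (0:ℝ) < (n : ℝ) + 3 := by positivity
    rw [div_le_div_iff_of_pos_right hden]
    have h0 := hma (n + 3) (by omega)
    have hidx : n + 3 - 1 = n + 2 := by omega
    rw [hidx] at h0
    exact h0
  -- the good set is infinite
  set P : ℕ → Prop := fun j => btil j / 2 ≤ bd j with hP
  have hSinf : ∀ N : ℕ, ∃ j, N ≤ j ∧ 1 ≤ j ∧ P j := by
    intro N
    by_contra hcon
    push_neg at hcon
    -- every good j with 1 ≤ j satisfies j < N
    set n := 4 * N + 4 with hn
    have hsub : (Finset.Icc 1 n).filter P ⊆ Finset.Icc 1 N := by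
      intro x hx
      rw [Finset.mem_filter, Finset.mem_Icc] at hx
      rw [Finset.mem_Icc]
      refine ⟨hx.1.1, ?_⟩
      by_contra hxN
      push_neg at hxN
      exact hcon x (by omega) hx.1.1 hx.2
    have hcard : ((Finset.Icc 1 n).filter P).card ≤ N + 1 := by
      calc ((Finset.Icc 1 n).filter P).card ≤ (Finset.Icc 1 N).card := Finset.card_le_card hsub
        _ ≤ N + 1 := by rw [Nat.card_Icc]; omega
    have h5n := h5 n (by omega)
    have hcR : (((Finset.Icc 1 n).filter P).card : ℝ) ≤ (N : ℝ) + 1 := by exact_mod_cast hcard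
    have hnR : (n : ℝ) = 4 * (N : ℝ) + 4 := by rw [hn]; push_cast; ring
    rw [hnR] at h5n
    linarith
  -- L ≤ M
  set F : ℝ := Real.log c₁ - Real.log 4 - Real.log c with hF
  have hLM : L ≤ M := by
    have hg : Tendsto (fun n : ℕ => (F + a (n + 1)) / ((n : ℝ) + 2)) atTop (𝓝 L) :=
      tendsto_affine_shift a L F 1 2 hLtend
    have hgood : ∀ j : ℕ, 1 ≤ j → P j → (F + a (j + 1)) / ((j : ℝ) + 2) ≤ M := by
      intro j hj hPj
      have hden : (0:ℝ) < (j : ℝ) + 2 := by positivity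
      rw [div_le_iff₀ hden]
      have hup : mm (j + 2) ≤ M * ((j : ℝ) + 2) := by
        have := hMup (j + 2) (by omega)
        have hcast : ((j + 2 : ℕ) : ℝ) = (j : ℝ) + 2 := by push_cast; ring
        rwa [hcast] at this
      -- mm (j+2) ≥ F + a (j+1)
      have hbtil2 : b j ≤ 4 * bd j := by
        have := (h1 j).2
        rw [hP] at hPj
        linarith
      have hlog : Real.log (b j) ≤ Real.log (4 * bd j) :=
        Real.log_le_log (hbpos _) hbtil2
      rw [Real.log_mul (by norm_num) (ne_of_gt (hbdpos _))] at hlog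
      have hidx1 : j + 2 - 2 = j := by omega
      have hidx2 : j + 1 - 1 = j := by omega
      have hlow : F + a (j + 1) ≤ mm (j + 2) := by
        simp only [hmm, ha, hidx1, hidx2, hF]
        linarith
      calc F + a (j + 1) ≤ mm (j + 2) := hlow
        _ ≤ M * ((j : ℝ) + 2) := hup
    by_contra hcon
    push_neg at hcon
    have hev : ∀ᶠ j : ℕ in atTop, M < (F + a (j + 1)) / ((j : ℝ) + 2) :=
      hg.eventually (eventually_gt_nhds hcon)
    rw [eventually_atTop] at hev
    obtain ⟨N, hN⟩ := hev
    obtain ⟨j, hjN, hj1, hjP⟩ := hSinf N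
    exact absurd (hgood j hj1 hjP) (not_le.2 (hN j hjN))
  have hMLeq : M = L := le_antisymm hML hLM
  -- limit statements
  have hlogb : Tendsto (fun n : ℕ => Real.log (b n) / n) atTop (𝓝 L) := by
    have hsh := shift_div_tendsto a L hLtend 1
    have hc' : Tendsto (fun n : ℕ => Real.log c * (1 / (n : ℝ))) atTop (𝓝 0) := by
      simpa using tendsto_one_div_atTop_nhds_zero_nat.const_mul (Real.log c)
    have hcomb := hsh.sub hc'
    rw [sub_zero] at hcomb
    refine hcomb.congr' ?_
    filter_upwards [eventually_ge_atTop 1] with n hn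
    have hn0 : (n : ℝ) ≠ 0 := by
      have : (0:ℝ) < n := by exact_mod_cast hn
      linarith
    have hidx : n + 1 - 1 = n := by omega
    simp only [ha, hidx]
    field_simp
    ring
  have hlogbd : Tendsto (fun n : ℕ => Real.log (bd n) / n) atTop (𝓝 L) := by
    have hsh := shift_div_tendsto mm M hMtend 2
    have hc' : Tendsto (fun n : ℕ => Real.log c₁ * (1 / (n : ℝ))) atTop (𝓝 0) := by
      simpa using tendsto_one_div_atTop_nhds_zero_nat.const_mul (Real.log c₁)
    have hcomb := hsh.sub hc'
    rw [sub_zero, hMLeq] at hcomb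
    refine hcomb.congr' ?_
    filter_upwards [eventually_ge_atTop 1] with n hn
    have hn0 : (n : ℝ) ≠ 0 := by
      have : (0:ℝ) < n := by exact_mod_cast hn
      linarith
    have hidx : n + 2 - 2 = n := by omega
    simp only [hmm, hidx]
    field_simp
    ring
  refine ⟨-L, ?_, ?_, ?_⟩
  · have heq : (fun n : ℕ => b n ^ (1 / (n : ℝ))) =
        fun n : ℕ => Real.exp (Real.log (b n) * (1 / (n : ℝ))) :=
      funext fun n => Real.rpow_def_of_pos (hbpos n) _
    rw [heq, neg_neg]
    have h' : Tendsto (fun n : ℕ => Real.log (b n) * (1 / (n : ℝ))) atTop (𝓝 L) := by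
      refine hlogb.congr (fun n => ?_)
      rw [mul_one_div]
    exact (Real.continuous_exp.tendsto L).comp h'
  · have heq : (fun n : ℕ => bd n ^ (1 / (n : ℝ))) =
        fun n : ℕ => Real.exp (Real.log (bd n) * (1 / (n : ℝ))) :=
      funext fun n => Real.rpow_def_of_pos (hbdpos n) _
    rw [heq, neg_neg]
    have h' : Tendsto (fun n : ℕ => Real.log (bd n) * (1 / (n : ℝ))) atTop (𝓝 L) := by
      refine hlogbd.congr (fun n => ?_)
      rw [mul_one_div]
    exact (Real.continuous_exp.tendsto L).comp h'
  -- constants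
  · set C₁ : ℝ := Real.exp (L - Real.log c) with hC₁
    set Cd : ℝ := Real.exp (2 * L - Real.log c₁) with hCd
    set Cb : ℝ := 16 * c * Cd ^ 2 * Real.exp (-L) with hCb
    set T : ℕ → ℝ := fun i => b i * Real.exp (-((i : ℝ) * L)) with hT
    set C₂ : ℝ := C₁ + Cd + Cb + T 1 + T 2 + T 3 with hC₂
    have hC₁pos : 0 < C₁ := Real.exp_pos _
    have hCdpos : 0 < Cd := Real.exp_pos _
    have hCbpos : 0 < Cb := by
      rw [hCb]
      exact mul_pos (mul_pos (mul_pos (by norm_num) hc) (pow_pos hCdpos 2)) (Real.exp_pos _)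
    have hTpos : ∀ i, 0 < T i := fun i => mul_pos (hbpos i) (Real.exp_pos _)
    have hC₂C₁ : C₁ ≤ C₂ := by
      have := hTpos 1; have := hTpos 2; have := hTpos 3
      rw [hC₂]; linarith
    have hCdC₂ : Cd ≤ C₂ := by
      have := hTpos 1; have := hTpos 2; have := hTpos 3
      rw [hC₂]; linarith
    have hCbC₂ : Cb ≤ C₂ := by
      have := hTpos 1; have := hTpos 2; have := hTpos 3
      rw [hC₂]; linarith
    -- key bounds
    have hblow : ∀ n : ℕ, 1 ≤ n → C₁ * Real.exp ((n : ℝ) * L) ≤ b n := by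
      intro n hn
      have hA := hLlow (n + 1) (by omega)
      have hidx : n + 1 - 1 = n := by omega
      have hA' : L * ((n : ℝ) + 1) ≤ Real.log c + Real.log (b n) := by
        have hcast : ((n + 1 : ℕ) : ℝ) = (n : ℝ) + 1 := by push_cast; ring
        rw [hcast] at hA
        simpa only [ha, hidx] using hA
      calc C₁ * Real.exp ((n : ℝ) * L) = Real.exp (L - Real.log c + (n : ℝ) * L) := by
            rw [hC₁, ← Real.exp_add]
        _ ≤ Real.exp (Real.log (b n)) := by
            apply Real.exp_le_exp.2
            linarith
        _ = b n := Real.exp_log (hbpos n)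
    have hbdup : ∀ n : ℕ, 1 ≤ n → bd n ≤ Cd * Real.exp ((n : ℝ) * L) := by
      intro n hn
      have hA := hMup (n + 2) (by omega)
      have hidx : n + 2 - 2 = n := by omega
      have hA' : Real.log c₁ + Real.log (bd n) ≤ L * ((n : ℝ) + 2) := by
        have hcast : ((n + 2 : ℕ) : ℝ) = (n : ℝ) + 2 := by push_cast; ring
        rw [hcast, hMLeq] at hA
        simp only [hmm, hidx] at hA
        linarith
      calc bd n = Real.exp (Real.log (bd n)) := (Real.exp_log (hbdpos n)).symm
        _ ≤ Real.exp (2 * L - Real.log c₁ + (n : ℝ) * L) := by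
            apply Real.exp_le_exp.2
            linarith
        _ = Cd * Real.exp ((n : ℝ) * L) := by rw [hCd, ← Real.exp_add]
    have hbup4 : ∀ n : ℕ, 4 ≤ n → b n ≤ Cb * Real.exp ((n : ℝ) * L) := by
      intro n hn
      obtain ⟨j, k, hj, hk, hjk, hPj, hPk⟩ := good_pair n hn P (h5 (n - 1) (by omega))
      have hbn : b n ≤ c * b j * b k := by
        have := h2 j k hj hk
        rwa [hjk] at this
      have hbj : b j ≤ 4 * bd j := by
        have := (h1 j).2
        rw [hP] at hPj
        linarith
      have hbk : b k ≤ 4 * bd k := by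
        have := (h1 k).2
        rw [hP] at hPk
        linarith
      have hbdj := hbdup j hj
      have hbdk := hbdup k hk
      have hjk' : (j : ℝ) + k = (n : ℝ) - 1 := by
        have : ((j + k + 1 : ℕ) : ℝ) = (n : ℝ) := by rw [hjk]
        push_cast at this
        linarith
      calc b n ≤ c * b j * b k := hbn
        _ ≤ c * (4 * (Cd * Real.exp ((j : ℝ) * L))) * (4 * (Cd * Real.exp ((k : ℝ) * L))) := by
            have h1' : b j ≤ 4 * (Cd * Real.exp ((j : ℝ) * L)) := by linarith
            have h2' : b k ≤ 4 * (Cd * Real.exp ((k : ℝ) * L)) := by linarith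
            have hbj0 : 0 < b j := hbpos j
            have hbk0 : 0 < b k := hbpos k
            gcongr
        _ = 16 * c * Cd ^ 2 * Real.exp ((j : ℝ) * L + (k : ℝ) * L) := by
            rw [Real.exp_add]; ring
        _ = Cb * Real.exp ((n : ℝ) * L) := by
            rw [hCb, show (j : ℝ) * L + (k : ℝ) * L = -L + (n : ℝ) * L by
              linear_combination L * hjk', Real.exp_add]
            ring
    refine ⟨C₁, C₂, hC₁pos, hC₂C₁, ?_⟩
    intro n hn
    have hxexp : Real.exp (-((n : ℝ) * -L)) = Real.exp ((n : ℝ) * L) := by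
      congr 1; ring
    rw [hxexp]
    refine ⟨hblow n hn, ?_, ?_⟩
    · rcases le_or_gt 4 n with h4n | h4n
      · calc b n ≤ Cb * Real.exp ((n : ℝ) * L) := hbup4 n h4n
          _ ≤ C₂ * Real.exp ((n : ℝ) * L) :=
            mul_le_mul_of_nonneg_right hCbC₂ (le_of_lt (Real.exp_pos _))
      · have hsmall : ∀ i : ℕ, b i = T i * Real.exp ((i : ℝ) * L) := by
          intro i
          rw [hT]
          simp only
          rw [mul_assoc, ← Real.exp_add]
          simp
        have hTC₂ : ∀ i : ℕ, 1 ≤ i → i ≤ 3 → T i ≤ C₂ := by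
          intro i hi1 hi3
          have := hTpos 1; have := hTpos 2; have := hTpos 3
          interval_cases i <;> (rw [hC₂]; linarith)
        calc b n = T n * Real.exp ((n : ℝ) * L) := hsmall n
          _ ≤ C₂ * Real.exp ((n : ℝ) * L) :=
            mul_le_mul_of_nonneg_right (hTC₂ n hn (by omega)) (le_of_lt (Real.exp_pos _))
    · calc bd n ≤ Cd * Real.exp ((n : ℝ) * L) := hbdup n hn
        _ ≤ C₂ * Real.exp ((n : ℝ) * L) :=
          mul_le_mul_of_nonneg_right hCdC₂ (le_of_lt (Real.exp_pos _))
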